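/- Let X, Y be independent nonnegative random variables with tail functions F₀(x)=P(X>x), F₁(x)=P(Y>x), and set g₀ = -log F₀, g₁ = -log F₁, g = (g₀+g₁)/2. Define L⁰_{m,d} = {ℓ ∈ [0,2m] : (g₀(ℓ)+g₁(2m-ℓ))/2 ≤ g(m)+d}. Then P(X+Y > 2m) ≥ e^{-2d}·P(X>m)·P(Y>m)·|L⁰_{m,d}|_{g₀}, where |·|_{g₀} is the Lebesgue–Stieltjes measure of g₀. -/

import Mathlib

open MeasureTheory ProbabilityTheory Filter

/-!
By independence, `P(X + Y > 2m) = ∫ F₁(2m - x) dμ(x)` with `μ` the law of `X`. On `L⁰_{m,d}`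
the defining inequality reads `F₁(2m - x) ≥ e^{-2d} F₀(m) F₁(m) / F₀(x)`, so the integral is at
least `e^{-2d} F₀(m) F₁(m)` times the mass of `L⁰_{m,d}` under `F₀⁻¹ dμ`. It remains to see
`dg₀ ≤ F₀⁻¹ dμ`, i.e. `log F₀(a) - log F₀(b) ≤ ∫_{(a,b]} F₀⁻¹ dμ`: write
`F₀(x)⁻¹ - F₀(a)⁻¹ = ∫_{F₀(x)}^{F₀(a)} t⁻² dt`, exchange the integrals, and use
`μ {x ∈ (a,b] | F₀(x) < t} ≥ t - F₀(b)`.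
-/

open Set ENNReal Topology

theorem setLIntegral_Ioc_ofReal_eq_sub {f f' : ℝ → ℝ} {a b : ℝ} (hab : a ≤ b)
    (hf : ∀ t ∈ Icc a b, HasDerivAt f (f' t) t) (hf' : ContinuousOn f' (Icc a b))
    (hpos : ∀ t ∈ Ioc a b, 0 ≤ f' t) :
    ∫⁻ t in Ioc a b, ENNReal.ofReal (f' t) = ENNReal.ofReal (f b - f a) := by
  rw [← ofReal_integral_eq_lintegral_ofReal
      ((hf'.integrableOn_compact isCompact_Icc).mono_set Ioc_subset_Icc_self)
      ((ae_restrict_iff' measurableSet_Ioc).2 (ae_of_all _ hpos)),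
    ← intervalIntegral.integral_of_le hab,
    intervalIntegral.integral_eq_sub_of_hasDerivAt (by rwa [uIcc_of_le hab])
      (hf'.mono (uIcc_of_le hab).subset).intervalIntegrable]

theorem setLIntegral_Ioc_inv_sq {u v : ℝ} (hu : 0 < u) (huv : u ≤ v) :
    ∫⁻ t in Ioc u v, ENNReal.ofReal (t ^ 2)⁻¹ = ENNReal.ofReal (u⁻¹ - v⁻¹) := by
  rw [setLIntegral_Ioc_ofReal_eq_sub (f := fun t => -t⁻¹) huv
    (fun t ht => (hasDerivAt_inv (hu.trans_le ht.1).ne').neg.congr_deriv (neg_neg _))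
    ((continuousOn_id.pow 2).inv₀ fun t ht => (pow_pos (hu.trans_le ht.1) 2).ne')
    (fun t _ => by positivity)]
  ring_nf

theorem setLIntegral_Ioc_inv_sq_mul_sub {w v : ℝ} (hw : 0 < w) (hwv : w ≤ v) :
    ∫⁻ t in Ioc w v, ENNReal.ofReal ((t ^ 2)⁻¹ * (t - w)) =
      ENNReal.ofReal (Real.log v + w / v - (Real.log w + 1)) := by
  rw [setLIntegral_Ioc_ofReal_eq_sub (f := fun t => Real.log t + w * t⁻¹) hwv ?_ ?_ ?_]
  · rw [mul_inv_cancel₀ hw.ne', div_eq_mul_inv]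
  · intro t ht
    have ht0 : 0 < t := hw.trans_le ht.1
    refine ((Real.hasDerivAt_log ht0.ne').add
      ((hasDerivAt_inv ht0.ne').const_mul w)).congr_deriv ?_
    field_simp
    ring
  · exact ((continuousOn_id.pow 2).inv₀ fun t ht => (pow_pos (hw.trans_le ht.1) 2).ne').mul
      (continuousOn_id.sub continuousOn_const)
  · intro t ht
    have : 0 ≤ t - w := sub_nonneg.2 ht.1.le
    positivity

theorem tendsto_measure_Ioc_nhdsGT {ρ : Measure ℝ} {x : ℝ} (hρ : ρ (Ioc x (x + 1)) ≠ ∞) :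
    Tendsto (fun y => ρ (Ioc x y)) (𝓝[>] x) (𝓝 0) := by
  have hInter : ⋂ r > x, Ioc x r = ∅ := by
    refine eq_empty_of_forall_notMem fun y hy => ?_
    obtain ⟨r, hxr, hry⟩ := exists_between (mem_iInter₂.1 hy (x + 1) (by linarith)).1
    exact (mem_iInter₂.1 hy r hxr).2.not_gt hry
  simpa only [hInter, measure_empty, Function.comp_def] using
    tendsto_measure_biInter_gt (μ := ρ) (s := fun r => Ioc x r) (a := x)
      (fun _ _ => nullMeasurableSet_Ioc) (fun _ _ _ hij => Ioc_subset_Ioc_right hij)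
      ⟨x + 1, by linarith, hρ⟩

theorem exists_stieltjesFunction_sub_eq_measureReal_Ioc (ρ : Measure ℝ)
    (hρ : ∀ a b, ρ (Ioc a b) ≠ ∞) :
    ∃ G : StieltjesFunction ℝ, ∀ a b, a ≤ b → G b - G a = ρ.real (Ioc a b) := by
  set G : ℝ → ℝ := fun x => ρ.real (Ioc 0 x) - ρ.real (Ioc x 0)
  have hsplit : ∀ a b c : ℝ, a ≤ b → b ≤ c →
      ρ.real (Ioc a c) = ρ.real (Ioc a b) + ρ.real (Ioc b c) := fun a b c hab hbc => by
    rw [← Ioc_union_Ioc_eq_Ioc hab hbc,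
      measureReal_union (Ioc_disjoint_Ioc_of_le le_rfl) measurableSet_Ioc (hρ a b) (hρ b c)]
  have hG : ∀ a b, a ≤ b → G b - G a = ρ.real (Ioc a b) := by
    intro a b hab
    rcases le_total 0 a with h0a | ha0
    · simp only [G, Ioc_eq_empty_of_le h0a, Ioc_eq_empty_of_le (h0a.trans hab),
        hsplit 0 a b h0a hab, measureReal_empty]
      ring
    rcases le_total 0 b with h0b | hb0
    · simp only [G, Ioc_eq_empty_of_le ha0, Ioc_eq_empty_of_le h0b, hsplit a 0 b ha0 h0b,
        measureReal_empty]
      ring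
    · simp only [G, Ioc_eq_empty_of_le ha0, Ioc_eq_empty_of_le hb0, hsplit a b 0 hab hb0,
        measureReal_empty]
      ring
  have hmono : Monotone G := fun a b hab => sub_nonneg.1 (hG a b hab ▸ measureReal_nonneg)
  have hcont : ∀ x, ContinuousWithinAt G (Ici x) x := by
    intro x
    rw [← continuousWithinAt_Ioi_iff_Ici]
    have hlim := tendsto_const_nhds (x := G x) |>.add
      ((ENNReal.tendsto_toReal zero_ne_top).comp (tendsto_measure_Ioc_nhdsGT (hρ x (x + 1))))
    rw [toReal_zero, add_zero] at hlim
    refine hlim.congr' ?_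
    filter_upwards [self_mem_nhdsWithin] with y hy
    simp only [Function.comp_apply, ← measureReal_def, ← hG x y (le_of_lt hy)]
    ring
  exact ⟨⟨G, hmono, hcont⟩, hG⟩

theorem StieltjesFunction.measure_le_of_forall_Ioc_le (f : StieltjesFunction ℝ) {ρ : Measure ℝ}
    (hρ : ∀ a b, ρ (Ioc a b) ≠ ∞)
    (h : ∀ a b, a ≤ b → ENNReal.ofReal (f b - f a) ≤ ρ (Ioc a b)) : f.measure ≤ ρ := by
  obtain ⟨G, hG⟩ := exists_stieltjesFunction_sub_eq_measureReal_Ioc ρ hρ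
  have hGρ : G.measure = ρ := by
    refine Measure.ext_of_Ioc' _ _ (fun a b _ => by simp [G.measure_Ioc]) fun a b hab => ?_
    rw [G.measure_Ioc, hG a b hab.le, ofReal_measureReal (hρ a b)]
  have hfG : ∀ a b, a ≤ b → f b - f a ≤ G b - G a := fun a b hab => by
    rw [hG a b hab]
    exact (ofReal_le_iff_le_toReal (hρ a b)).1 (h a b hab)
  let k : StieltjesFunction ℝ := ⟨fun x => G x - f x, fun a b hab => by linarith [hfG a b hab],
    fun x => (G.right_continuous x).sub (f.right_continuous x)⟩
  have hGfk : G = f + k := StieltjesFunction.ext fun x => by simp [k]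
  rw [← hGρ, hGfk, StieltjesFunction.measure_add]
  exact Measure.le_add_right le_rfl

namespace MeasureTheory.Measure

def tail (μ : Measure ℝ) (x : ℝ) : ℝ := μ.real (Ioi x)

theorem tail_map {Ω : Type*} [MeasurableSpace Ω] (P : Measure Ω) {X : Ω → ℝ} (hX : Measurable X)
    (x : ℝ) : (P.map X).tail x = (P {ω | x < X ω}).toReal := by
  rw [tail, measureReal_def, map_apply hX measurableSet_Ioi]
  rfl

theorem tail_nonneg (μ : Measure ℝ) (x : ℝ) : 0 ≤ μ.tail x := measureReal_nonneg

variable (μ : Measure ℝ) [IsFiniteMeasure μ]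

theorem ofReal_tail (x : ℝ) : ENNReal.ofReal (μ.tail x) = μ (Ioi x) := ofReal_measureReal

theorem tail_antitone : Antitone μ.tail := fun _ _ h => measureReal_mono (Ioi_subset_Ioi h)

theorem measure_Ioc_eq_ofReal_tail_sub {a b : ℝ} (hab : a ≤ b) :
    μ (Ioc a b) = ENNReal.ofReal (μ.tail a - μ.tail b) := by
  rw [← Ioi_sdiff_Ioi, measure_sdiff (Ioi_subset_Ioi hab) measurableSet_Ioi.nullMeasurableSet
    (measure_ne_top μ _), ← ofReal_tail, ← ofReal_tail, ENNReal.ofReal_sub _ (μ.tail_nonneg b)]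

theorem measure_setOf_le_tail_inter_Ioc_le (a b t : ℝ) :
    μ ({x | t ≤ μ.tail x} ∩ Ioc a b) ≤ ENNReal.ofReal (μ.tail a - t) := by
  have hmeas : MeasurableSet ({x | t ≤ μ.tail x} ∩ Ioc a b) :=
    (measurableSet_le measurable_const μ.tail_antitone.measurable).inter measurableSet_Ioc
  rw [hmeas.measure_eq_iSup_isCompact]
  refine iSup₂_le fun K hK => iSup_le fun hKc => ?_
  rcases K.eq_empty_or_nonempty with rfl | hne
  · simp
  have hsup := hK (hKc.sSup_mem hne)
  calc μ K ≤ μ (Ioc a (sSup K)) :=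
        measure_mono fun x hx => ⟨(hK hx).2.1, le_csSup hKc.bddAbove hx⟩
    _ = ENNReal.ofReal (μ.tail a - μ.tail (sSup K)) :=
        μ.measure_Ioc_eq_ofReal_tail_sub hsup.2.1.le
    _ ≤ ENNReal.ofReal (μ.tail a - t) := ofReal_le_ofReal (by linarith [hsup.1.out])

theorem ofReal_sub_tail_le_measure_setOf_tail_lt_inter_Ioc {a b t : ℝ} (hab : a ≤ b)
    (ht : t ≤ μ.tail a) :
    ENNReal.ofReal (t - μ.tail b) ≤ μ ({x | μ.tail x < t} ∩ Ioc a b) := by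
  have hcover : μ (Ioc a b) ≤
      μ ({x | μ.tail x < t} ∩ Ioc a b) + μ ({x | t ≤ μ.tail x} ∩ Ioc a b) := by
    refine (measure_mono fun x hx => ?_).trans (measure_union_le _ _)
    rcases lt_or_ge (μ.tail x) t with h | h
    exacts [Or.inl ⟨h, hx⟩, Or.inr ⟨h, hx⟩]
  rw [μ.measure_Ioc_eq_ofReal_tail_sub hab] at hcover
  calc ENNReal.ofReal (t - μ.tail b)
      = ENNReal.ofReal (μ.tail a - μ.tail b) - ENNReal.ofReal (μ.tail a - t) := by
        rw [← ENNReal.ofReal_sub _ (sub_nonneg.2 ht)]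
        ring_nf
    _ ≤ μ ({x | μ.tail x < t} ∩ Ioc a b) :=
        tsub_le_iff_right.2 <| hcover.trans <| by
          gcongr
          exact μ.measure_setOf_le_tail_inter_Ioc_le a b t

theorem setLIntegral_inv_sq_mul_measure_tail_lt_inter_Ioc {a b : ℝ} (hb : 0 < μ.tail b) :
    ∫⁻ t in Ioc (μ.tail b) (μ.tail a),
        ENNReal.ofReal (t ^ 2)⁻¹ * μ ({x | μ.tail x < t} ∩ Ioc a b) =
      ∫⁻ x in Ioc a b, ENNReal.ofReal ((μ.tail x)⁻¹ - (μ.tail a)⁻¹) ∂μ := by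
  have hFm : Measurable μ.tail := μ.tail_antitone.measurable
  set φ : ℝ → ℝ → ℝ≥0∞ := fun x t =>
    (Ioi (μ.tail x)).indicator (fun t => ENNReal.ofReal (t ^ 2)⁻¹) t
  have hφx : ∀ t, ENNReal.ofReal (t ^ 2)⁻¹ * μ ({x | μ.tail x < t} ∩ Ioc a b) =
      ∫⁻ x in Ioc a b, φ x t ∂μ := fun t => by
    rw [← Measure.restrict_apply (measurableSet_lt hFm measurable_const),
      ← lintegral_indicator_const (measurableSet_lt hFm measurable_const)]
    rfl
  have hφt : ∀ x ∈ Ioc a b, ∫⁻ t in Ioc (μ.tail b) (μ.tail a), φ x t =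
      ENNReal.ofReal ((μ.tail x)⁻¹ - (μ.tail a)⁻¹) := fun x hx => by
    rw [lintegral_indicator measurableSet_Ioi, Measure.restrict_restrict measurableSet_Ioi,
      inter_comm, Ioc_inter_Ioi, sup_eq_right.2 (μ.tail_antitone hx.2),
      setLIntegral_Ioc_inv_sq (hb.trans_le (μ.tail_antitone hx.2)) (μ.tail_antitone hx.1.le)]
  have hφ : Measurable (Function.uncurry fun t x => φ x t) :=
    ((measurable_fst.pow_const 2).inv.ennreal_ofReal).indicator
      (measurableSet_lt (hFm.comp measurable_snd) measurable_fst)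
  rw [lintegral_congr hφx, lintegral_lintegral_swap hφ.aemeasurable,
    setLIntegral_congr_fun measurableSet_Ioc hφt]

theorem ofReal_log_tail_sub_le_setLIntegral_inv_tail {a b : ℝ} (hab : a ≤ b)
    (hb : 0 < μ.tail b) :
    ENNReal.ofReal (Real.log (μ.tail a) - Real.log (μ.tail b)) ≤
      ∫⁻ x in Ioc a b, ENNReal.ofReal (μ.tail x)⁻¹ ∂μ := by
  set F := μ.tail
  have hba : F b ≤ F a := μ.tail_antitone hab
  have ha : 0 < F a := hb.trans_le hba
  calc ENNReal.ofReal (Real.log (F a) - Real.log (F b))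
      = ENNReal.ofReal (F a)⁻¹ * μ (Ioc a b) +
          ∫⁻ t in Ioc (F b) (F a), ENNReal.ofReal ((t ^ 2)⁻¹ * (t - F b)) := by
        have hlog : Real.log (F b) - Real.log (F a) ≤ F b / F a - 1 := by
          rw [← Real.log_div hb.ne' ha.ne']
          exact Real.log_le_sub_one_of_pos (div_pos hb ha)
        rw [setLIntegral_Ioc_inv_sq_mul_sub hb hba, μ.measure_Ioc_eq_ofReal_tail_sub hab,
          ← ENNReal.ofReal_mul (inv_nonneg.2 ha.le),
          ← ENNReal.ofReal_add (mul_nonneg (inv_nonneg.2 ha.le) (sub_nonneg.2 hba))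
            (by linarith)]
        congr 1
        field_simp
        ring
    _ ≤ ENNReal.ofReal (F a)⁻¹ * μ (Ioc a b) + ∫⁻ t in Ioc (F b) (F a),
          ENNReal.ofReal (t ^ 2)⁻¹ * μ ({x | F x < t} ∩ Ioc a b) := by
        gcongr ENNReal.ofReal (F a)⁻¹ * μ (Ioc a b) + ?_
        refine setLIntegral_mono' measurableSet_Ioc fun t ht => ?_
        rw [ENNReal.ofReal_mul (inv_nonneg.2 (sq_nonneg t))]
        exact mul_le_mul_right (μ.ofReal_sub_tail_le_measure_setOf_tail_lt_inter_Ioc hab ht.2) _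
    _ = ∫⁻ x in Ioc a b, ENNReal.ofReal (F x)⁻¹ ∂μ := by
        rw [μ.setLIntegral_inv_sq_mul_measure_tail_lt_inter_Ioc hb, ← setLIntegral_const,
          ← lintegral_add_left measurable_const]
        refine setLIntegral_congr_fun measurableSet_Ioc fun x hx => ?_
        rw [← ENNReal.ofReal_add (inv_nonneg.2 ha.le) (sub_nonneg.2
            (inv_anti₀ (hb.trans_le (μ.tail_antitone hx.2)) (μ.tail_antitone hx.1.le))),
          add_sub_cancel]

end MeasureTheory.Measure

namespace StieltjesFunction

variable (μ : Measure ℝ) [IsFiniteMeasure μ] (f : StieltjesFunction ℝ)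

theorem measure_le_withDensity_inv_tail (hpos : ∀ x, 0 < μ.tail x)
    (hf : ∀ x, f x = -Real.log (μ.tail x)) :
    f.measure ≤ μ.withDensity fun x => ENNReal.ofReal (μ.tail x)⁻¹ := by
  refine f.measure_le_of_forall_Ioc_le (fun a b => ?_) fun a b hab => ?_
  · rw [withDensity_apply _ measurableSet_Ioc]
    refine (lt_of_le_of_lt (setLIntegral_mono measurable_const fun x hx =>
      ENNReal.ofReal_le_ofReal (inv_anti₀ (hpos b) (μ.tail_antitone hx.2))) ?_).ne
    rw [setLIntegral_const]
    exact mul_lt_top ofReal_lt_top (measure_lt_top μ _)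
  · rw [withDensity_apply _ measurableSet_Ioc, hf, hf, neg_sub_neg]
    exact μ.ofReal_log_tail_sub_le_setLIntegral_inv_tail hab (hpos b)

theorem ofReal_mul_measure_le_lintegral (hpos : ∀ x, 0 < μ.tail x)
    (hf : ∀ x, f x = -Real.log (μ.tail x)) {h : ℝ → ℝ} (hh : Measurable h) {C : ℝ}
    {L : Set ℝ} (hL : ∀ x ∈ L, C ≤ μ.tail x * h x) :
    ENNReal.ofReal C * f.measure L ≤ ∫⁻ x, ENNReal.ofReal (h x) ∂μ :=
  calc ENNReal.ofReal C * f.measure L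
      ≤ ENNReal.ofReal C * (μ.withDensity fun x => ENNReal.ofReal (μ.tail x)⁻¹) L := by
        gcongr
        exact f.measure_le_withDensity_inv_tail μ hpos hf
    _ = ∫⁻ x in L, ENNReal.ofReal (C * (μ.tail x)⁻¹) ∂μ := by
        rw [withDensity_apply' _ L, ← lintegral_const_mul' _ _ ofReal_ne_top]
        exact lintegral_congr fun x => (ENNReal.ofReal_mul' (inv_nonneg.2 (hpos x).le)).symm
    _ ≤ ∫⁻ x in L, ENNReal.ofReal (h x) ∂μ :=
        setLIntegral_mono hh.ennreal_ofReal fun x hx => ofReal_le_ofReal <| by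
          rw [← div_eq_mul_inv, div_le_iff₀' (hpos x)]
          exact hL x hx
    _ ≤ ∫⁻ x, ENNReal.ofReal (h x) ∂μ := setLIntegral_le_lintegral _ _

end StieltjesFunction

theorem ProbabilityTheory.IndepFun.measure_lt_add_eq_lintegral {Ω : Type*} [MeasurableSpace Ω]
    {P : Measure Ω} [IsFiniteMeasure P] {X Y : Ω → ℝ} (hX : Measurable X) (hY : Measurable Y)
    (hXY : IndepFun X Y P) (c : ℝ) :
    P {ω | c < X ω + Y ω} = ∫⁻ x, P.map Y (Ioi (c - x)) ∂P.map X := by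
  have hS : MeasurableSet {p : ℝ × ℝ | c < p.1 + p.2} :=
    measurableSet_lt measurable_const (measurable_fst.add measurable_snd)
  have hprod := (indepFun_iff_map_prod_eq_prod_map_map hX.aemeasurable hY.aemeasurable).1 hXY
  rw [show {ω | c < X ω + Y ω} = (fun ω => (X ω, Y ω)) ⁻¹' {p | c < p.1 + p.2} from rfl,
    ← Measure.map_apply (hX.prodMk hY) hS, hprod, Measure.prod_apply hS]
  refine lintegral_congr fun x => congrArg _ (ext fun y => ?_)
  simp only [mem_preimage, mem_ofPred_eq, mem_Ioi, sub_lt_iff_lt_add']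

theorem stmt_13_general {Ω : Type*} [MeasurableSpace Ω] (P : Measure Ω) [IsProbabilityMeasure P]
    (X Y : Ω → ℝ) (hXm : Measurable X) (hYm : Measurable Y)
    (hXY : IndepFun X Y P)
    (hXu : ∀ m : ℝ, 0 < P {ω | X ω > m}) (hYu : ∀ m : ℝ, 0 < P {ω | Y ω > m})
    (g₀ : StieltjesFunction ℝ) (g₁ : ℝ → ℝ)
    (hg₀ : ∀ x : ℝ, g₀ x = -Real.log (P {ω | X ω > x}).toReal)
    (hg₁ : ∀ x : ℝ, g₁ x = -Real.log (P {ω | Y ω > x}).toReal)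
    (m d : ℝ) :
    P {ω | X ω + Y ω > 2 * m} ≥
      ENNReal.ofReal (Real.exp (-(2 * d))) * P {ω | X ω > m} * P {ω | Y ω > m} *
        g₀.measure {ℓ : ℝ | ℓ ∈ Set.Icc 0 (2 * m) ∧
          (g₀ ℓ + g₁ (2 * m - ℓ)) / 2 ≤ (g₀ m + g₁ m) / 2 + d} := by
  set μ := P.map X
  set ν := P.map Y
  have hF₀ : ∀ x, (P {ω | X ω > x}).toReal = μ.tail x := fun x => (P.tail_map hXm x).symm
  have hF₁ : ∀ x, (P {ω | Y ω > x}).toReal = ν.tail x := fun x => (P.tail_map hYm x).symm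
  have hF₀pos : ∀ x, 0 < μ.tail x := fun x => hF₀ x ▸ toReal_pos (hXu x).ne' (measure_ne_top _ _)
  have hF₁pos : ∀ x, 0 < ν.tail x := fun x => hF₁ x ▸ toReal_pos (hYu x).ne' (measure_ne_top _ _)
  have hexp₀ : ∀ x, μ.tail x = Real.exp (-g₀ x) := fun x => by
    rw [hg₀, hF₀, neg_neg, Real.exp_log (hF₀pos x)]
  have hexp₁ : ∀ x, ν.tail x = Real.exp (-g₁ x) := fun x => by
    rw [hg₁, hF₁, neg_neg, Real.exp_log (hF₁pos x)]
  rw [ge_iff_le, ← ofReal_toReal (measure_ne_top P {ω | X ω > m}),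
    ← ofReal_toReal (measure_ne_top P {ω | Y ω > m}), hF₀, hF₁,
    ← ofReal_mul (Real.exp_pos _).le,
    ← ofReal_mul (mul_nonneg (Real.exp_pos _).le (μ.tail_nonneg m))]
  refine (g₀.ofReal_mul_measure_le_lintegral μ hF₀pos (fun x => hF₀ x ▸ hg₀ x)
    (h := fun x => ν.tail (2 * m - x))
    (ν.tail_antitone.measurable.comp (measurable_const.sub measurable_id))
    fun ℓ hℓ => ?_).trans_eq ?_
  · simp only [hexp₀, hexp₁, ← Real.exp_add]
    exact Real.exp_le_exp.2 (by linarith [hℓ.2])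
  · simp only [ν.ofReal_tail]
    exact (hXY.measure_lt_add_eq_lintegral hXm hYm _).symm

/-- For independent nonnegative `X, Y` with log-tail functions
`g₀(x) = -log P(X>x)`, `g₁(x) = -log P(Y>x)`, `g = (g₀+g₁)/2`, and
`L⁰_{m,d} = {ℓ ∈ [0,2m] : (g₀(ℓ)+g₁(2m-ℓ))/2 ≤ g(m)+d}`, one has
`P(X+Y > 2m) ≥ e^{-2d} ⬝ P(X>m) ⬝ P(Y>m) ⬝ |L⁰_{m,d}|_{g₀}`. -/
theorem stmt_13 {Ω : Type*} [MeasurableSpace Ω] (P : Measure Ω) [IsProbabilityMeasure P]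
    (X Y : Ω → ℝ) (hXm : Measurable X) (hYm : Measurable Y)
    (hXY : IndepFun X Y P)
    (hX0 : ∀ ω, 0 ≤ X ω) (hY0 : ∀ ω, 0 ≤ Y ω)
    (hXu : ∀ m : ℝ, 0 < P {ω | X ω > m}) (hYu : ∀ m : ℝ, 0 < P {ω | Y ω > m})
    (g₀ : StieltjesFunction ℝ) (g₁ : ℝ → ℝ)
    (hg₀ : ∀ x : ℝ, g₀ x = -Real.log (P {ω | X ω > x}).toReal)
    (hg₁ : ∀ x : ℝ, g₁ x = -Real.log (P {ω | Y ω > x}).toReal)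
    (m d : ℝ) (hm : 0 ≤ m) (hd : 0 ≤ d) :
    P {ω | X ω + Y ω > 2 * m} ≥
      ENNReal.ofReal (Real.exp (-(2 * d))) * P {ω | X ω > m} * P {ω | Y ω > m} *
        g₀.measure {ℓ : ℝ | ℓ ∈ Set.Icc 0 (2 * m) ∧
          (g₀ ℓ + g₁ (2 * m - ℓ)) / 2 ≤ (g₀ m + g₁ m) / 2 + d} :=
  stmt_13_general P X Y hXm hYm hXY hXu hYu g₀ g₁ hg₀ hg₁ m d
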